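/- Let a : ℕ → ℂ be an arbitrary sequence, let t, u ∈ ℂ, and let N ≥ 1 be an integer. Then the coefficient of q^N in the formal power series (over ℂ) ∑_{n=1}^{N} a(n) · ∑_{i=0}^{N} t·u · q^{n+i} · (∏_{j=1}^{n−1} (1 − (1−u)·t·q^{i+j})) · (∏_{j=1}^{n} (1 − t·q^{i+j}))⁻¹ equals ∑_{π ∈ P(N)} t^{k(π)} u^{Q(π)} ∑_{j=1}^{s(π)} a(l(π) − s(π) + j). (This is the coefficient-of-q^N form of Theorem 3 of the paper, ∑_{n≥1} a_n ∑_{i≥0} (tu((1−u)tq^{i+1})_{n−1}/(tq^{i+1})_n) q^{n+i} = ∑_{n≥1} q^n ∑_{π∈P(n)} t^{k(π)} u^{Q(π)} ∑_{j=1}^{s(π)} a_{l(π)−s(π)+j}; the omitted terms are divisible by q^{n+i} with n+i > N and hence do not affect the coefficient of q^N.) -/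

import Mathlib

open Finset PowerSeries

/-- `k(π)`: number of parts of the partition `π`, counted with multiplicity. -/
def kParts {n : ℕ} (π : n.Partition) : ℕ := Multiset.card π.parts

/-- `Q(π)`: number of distinct parts of the partition `π`. -/
def qParts {n : ℕ} (π : n.Partition) : ℕ := π.parts.toFinset.card

/-- `l(π)`: largest part of the partition `π` (`0` for the empty partition). -/
def lPart {n : ℕ} (π : n.Partition) : ℕ := π.parts.sup

/-- `s(π)`: smallest part of the partition `π` (`0` for the empty partition). -/
def sPart {n : ℕ} (π : n.Partition) : ℕ := WithTop.untopD 0 π.parts.toFinset.min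

/-!
For `m ≥ 1` let `F m = (1 - (1 - u) t q^m) / (1 - t q^m) = 1 + ∑_{c ≥ 1} u t^c q^{cm}`:
the part `m`, taken `c ≥ 1` times, is weighted by `u t^c`. Since
`t u q^m / (1 - t q^m) = F m - 1`, the `(n, i)` summand is
`∏_{j ≤ n} F (i + j) - ∏_{j < n} F (i + j)`. By `Nat.Partition.hasProd_genFun` this is the
generating function, with weight `t^{k(π)} u^{Q(π)}`, of the partitions with all parts in
`[i + 1, i + n]` and a part `i + n`, i.e. with `l(π) = i + n` and `s(π) > i`. For fixed `π`
these pairs are `n = l(π) - s(π) + j`, `i = s(π) - j` with `1 ≤ j ≤ s(π)`.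
-/

section PartitionFacts

variable {n : ℕ} (π : n.Partition)

lemma lPart_eq_sup_toFinset : lPart π = π.parts.toFinset.sup id := by
  rw [lPart, sup_def, Multiset.map_id, Multiset.toFinset_val, Multiset.sup_dedup]

lemma le_lPart {m : ℕ} (hm : m ∈ π.parts) : m ≤ lPart π := Multiset.le_sup hm

lemma lPart_mem (h : π.parts ≠ 0) : lPart π ∈ π.parts := by
  obtain ⟨m, hm, hsup⟩ := exists_mem_eq_sup _ (Multiset.toFinset_nonempty.mpr h) id
  rw [lPart_eq_sup_toFinset, hsup]
  exact Multiset.mem_toFinset.mp hm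

lemma lPart_le : lPart π ≤ n := Multiset.sup_le.mpr fun _ hm => π.le_of_mem_parts hm

lemma sPart_le {m : ℕ} (hm : m ∈ π.parts) : sPart π ≤ m := by
  have h := Multiset.toFinset_nonempty.mpr (ne_of_mem_of_not_mem' hm (Multiset.notMem_zero m))
  rw [sPart, ← coe_min' h, WithTop.untopD_coe]
  exact min'_le _ _ (Multiset.mem_toFinset.mpr hm)

lemma sPart_mem (h : π.parts ≠ 0) : sPart π ∈ π.parts := by
  have h' := Multiset.toFinset_nonempty.mpr h
  rw [sPart, ← coe_min' h', WithTop.untopD_coe, ← Multiset.mem_toFinset]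
  exact min'_mem _ _

lemma sPart_pos_iff : 0 < sPart π ↔ π.parts ≠ 0 := by
  refine ⟨fun hs h => ?_, fun h => π.parts_pos (sPart_mem π h)⟩
  simp [sPart, h] at hs

lemma sPart_le_lPart : sPart π ≤ lPart π := by
  rcases eq_or_ne π.parts 0 with h | h
  · simp [sPart, h]
  · exact le_lPart π (sPart_mem π h)

lemma forall_mem_Icc_and_mem_iff (i k : ℕ) :
    ((∀ m ∈ π.parts, m ∈ Icc (i + 1) (i + k)) ∧ i + k ∈ π.parts) ↔
      (i + k = lPart π ∧ i < sPart π) := by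
  constructor
  · rintro ⟨hsub, hmem⟩
    have hne := ne_of_mem_of_not_mem' hmem (Multiset.notMem_zero _)
    have hl := mem_Icc.mp (hsub _ (lPart_mem π hne))
    have hs := mem_Icc.mp (hsub _ (sPart_mem π hne))
    exact ⟨le_antisymm (le_lPart π hmem) hl.2, hs.1⟩
  · rintro ⟨hl, hs⟩
    have hne := (sPart_pos_iff π).mp (by omega)
    refine ⟨fun m hm => mem_Icc.mpr ⟨?_, ?_⟩, hl ▸ lPart_mem π hne⟩
    · have := sPart_le π hm; omega
    · have := le_lPart π hm; omega

end PartitionFacts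

def partWeight {R : Type*} [CommSemiring R] (S : Finset ℕ) (u t : R) (m c : ℕ) : R :=
  if m ∈ S then u * t ^ c else 0

lemma prod_partWeight {R : Type*} [CommSemiring R] (S : Finset ℕ) (u t : R) {n : ℕ}
    (π : n.Partition) :
    π.parts.toFinsupp.prod (partWeight S u t) =
      if ∀ m ∈ π.parts, m ∈ S then t ^ kParts π * u ^ qParts π else 0 := by
  simp only [Finsupp.prod, Multiset.toFinsupp_support, Multiset.toFinsupp_apply, partWeight,
    prod_ite_zero, Multiset.mem_toFinset, prod_mul_distrib, prod_const, prod_pow_eq_pow_sum,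
    Multiset.toFinset_sum_count_eq, kParts, qParts, mul_comm]

noncomputable section

variable {K : Type*} [Field K]

def partFactor (u t : K) (m : ℕ) : K⟦X⟧ :=
  (1 - C ((1 - u) * t) * X ^ m) * (1 - C t * X ^ m)⁻¹

lemma constantCoeff_one_sub_C_mul_X_pow_ne_zero (t : K) {m : ℕ} (hm : m ≠ 0) :
    constantCoeff (1 - C t * X ^ m : K⟦X⟧) ≠ 0 := by
  simp [hm]

lemma partFactor_mul (u t : K) {m : ℕ} (hm : m ≠ 0) :
    partFactor u t m * (1 - C t * X ^ m) = 1 - C ((1 - u) * t) * X ^ m := by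
  rw [partFactor, mul_assoc,
    PowerSeries.inv_mul_cancel _ (constantCoeff_one_sub_C_mul_X_pow_ne_zero t hm), mul_one]

open PowerSeries.WithPiTopology in
lemma one_add_tsum_eq_partFactor [TopologicalSpace K] [IsTopologicalRing K] [T2Space K]
    (u t : K) {m : ℕ} (hm : m ≠ 0) :
    1 + ∑' j, (u * t ^ (j + 1)) • (X : K⟦X⟧) ^ (m * (j + 1)) = partFactor u t m := by
  set y : K⟦X⟧ := C t * X ^ m
  have hy : constantCoeff y = 0 := by simp [y, hm]
  have hterm (j : ℕ) :
      (u * t ^ (j + 1)) • (X : K⟦X⟧) ^ (m * (j + 1)) = C u * y * y ^ j := by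
    simp only [y, smul_eq_C_mul, map_mul, map_pow, pow_mul]; ring
  simp_rw [hterm]
  rw [partFactor,
    PowerSeries.eq_mul_inv_iff_mul_eq (constantCoeff_one_sub_C_mul_X_pow_ne_zero t hm),
    Summable.tsum_mul_left (C u * y) (summable_pow_of_constantCoeff_eq_zero hy), add_mul,
    mul_assoc, tsum_pow_mul_one_sub_of_constantCoeff_eq_zero hy]
  simp only [y, map_mul, map_sub, map_one]; ring

open PowerSeries.WithPiTopology Nat.Partition in
lemma genFun_partWeight (S : Finset ℕ) (hS : 0 ∉ S) (u t : K) :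
    genFun (partWeight S u t) = ∏ m ∈ S, partFactor u t m := by
  -- Neither side involves a topology; the discrete one makes `hasProd_genFun` available.
  let _ : TopologicalSpace K := ⊥
  have _ : DiscreteTopology K := ⟨rfl⟩
  have hfactor (i : ℕ) :
      1 + ∑' j, partWeight S u t (i + 1) (j + 1) • (X : K⟦X⟧) ^ ((i + 1) * (j + 1)) =
        if i + 1 ∈ S then partFactor u t (i + 1) else 1 := by
    split_ifs with hi
    · simp only [partWeight, if_pos hi]
      exact one_add_tsum_eq_partFactor u t i.succ_ne_zero
    · simp [partWeight, hi]
  have hinj : Set.InjOn (· + 1) ((· + 1) ⁻¹' (S : Set ℕ)) := (add_left_injective 1).injOn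
  refine ((hasProd_genFun _).unique (hasProd_prod_of_ne_finset_one (s := S.preimage (· + 1) hinj)
    fun i hi => ?_)).trans ?_
  · rw [hfactor, if_neg (by simpa using hi)]
  · rw [← prod_preimage (· + 1) S hinj (fun m => partFactor u t m)]
    · exact prod_congr rfl fun i hi => by rw [hfactor, if_pos (by simpa using hi)]
    · intro m hm hm'
      have hm0 : 0 < m := Nat.pos_of_ne_zero (ne_of_mem_of_not_mem hm hS)
      exact absurd ⟨m - 1, Nat.sub_add_cancel hm0⟩ hm'

lemma partFactor_sub_one_mul (u t : K) {m : ℕ} (hm : m ≠ 0) :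
    (partFactor u t m - 1) * (1 - C t * X ^ m) = C (t * u) * X ^ m := by
  rw [sub_mul, partFactor_mul u t hm, map_mul, map_mul, map_sub, map_one]
  ring

lemma term_eq_sub_prod_partFactor (u t : K) (i : ℕ) {n : ℕ} (hn : n ≠ 0) :
    C (t * u) * X ^ (n + i) * (∏ j ∈ Icc 1 (n - 1), (1 - C ((1 - u) * t) * X ^ (i + j))) *
        (∏ j ∈ Icc 1 n, (1 - C t * X ^ (i + j)))⁻¹ =
      ∏ j ∈ Icc 1 n, partFactor u t (i + j) -
        ∏ j ∈ Icc 1 (n - 1), partFactor u t (i + j) := by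
  obtain ⟨k, rfl⟩ := Nat.exists_eq_add_one_of_ne_zero hn
  have hD : constantCoeff (∏ j ∈ Icc 1 (k + 1), (1 - C t * X ^ (i + j) : K⟦X⟧)) ≠ 0 := by
    rw [map_prod]
    exact prod_ne_zero_iff.mpr fun j hj =>
      constantCoeff_one_sub_C_mul_X_pow_ne_zero t (by simp at hj; omega)
  have hP : (∏ j ∈ Icc 1 k, partFactor u t (i + j)) *
      ∏ j ∈ Icc 1 k, (1 - C t * X ^ (i + j)) =
        ∏ j ∈ Icc 1 k, (1 - C ((1 - u) * t) * X ^ (i + j)) := by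
    rw [← prod_mul_distrib]
    exact prod_congr rfl fun j hj => partFactor_mul u t (by simp at hj; omega)
  rw [Nat.add_sub_cancel, eq_comm, PowerSeries.eq_mul_inv_iff_mul_eq hD,
    prod_Icc_succ_top (by omega), prod_Icc_succ_top (by omega)]
  calc _ = (∏ j ∈ Icc 1 k, partFactor u t (i + j)) *
        (∏ j ∈ Icc 1 k, (1 - C t * X ^ (i + j))) *
        ((partFactor u t (i + (k + 1)) - 1) * (1 - C t * X ^ (i + (k + 1)))) := by ring
    _ = _ := by rw [hP, partFactor_sub_one_mul u t (by omega)]; ring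

lemma coeff_prod_partFactor_sub (u t : K) (i k N : ℕ) :
    coeff N (∏ j ∈ Icc 1 k, partFactor u t (i + j) -
        ∏ j ∈ Icc 1 (k - 1), partFactor u t (i + j)) =
      ∑ π : N.Partition,
        if i + k = lPart π ∧ i < sPart π then t ^ kParts π * u ^ qParts π else 0 := by
  have hgenFun (k : ℕ) : ∏ j ∈ Icc 1 k, partFactor u t (i + j) =
      Nat.Partition.genFun (partWeight (Icc (i + 1) (i + k)) u t) := by
    rw [genFun_partWeight _ (by simp), ← map_add_left_Icc, prod_map]
    rfl
  rw [hgenFun, hgenFun, map_sub, Nat.Partition.coeff_genFun, Nat.Partition.coeff_genFun,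
    ← sum_sub_distrib]
  refine sum_congr rfl fun π _ => ?_
  rw [prod_partWeight, prod_partWeight]
  simp only [← forall_mem_Icc_and_mem_iff π i k]
  by_cases hmem : i + k ∈ π.parts
  · have hnot : ¬ ∀ m ∈ π.parts, m ∈ Icc (i + 1) (i + (k - 1)) := fun h => by
      have := mem_Icc.mp (h _ hmem); omega
    rw [if_neg hnot, sub_zero]
    simp only [hmem, and_true]
  · have hiff : (∀ m ∈ π.parts, m ∈ Icc (i + 1) (i + k)) ↔
        ∀ m ∈ π.parts, m ∈ Icc (i + 1) (i + (k - 1)) := forall₂_congr fun m hm => by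
      have := ne_of_mem_of_not_mem hm hmem
      simp only [mem_Icc]; omega
    simp only [hiff, hmem, and_false, if_false, sub_self]

end

lemma sum_Icc_sum_range_ite {M : Type*} [AddCommMonoid M] (a : ℕ → M) {l s N : ℕ}
    (hsl : s ≤ l) (hlN : l ≤ N) :
    ∑ n ∈ Icc 1 N, ∑ i ∈ range (N + 1), (if i + n = l ∧ i < s then a n else 0) =
      ∑ j ∈ Icc 1 s, a (l - s + j) := by
  have hinner : ∀ n ∈ Icc 1 N,
      ∑ i ∈ range (N + 1), (if i + n = l ∧ i < s then a n else 0) =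
        if n ∈ Icc (l - s + 1) l then a n else 0 := by
    intro n hn
    rw [sum_eq_single (l - n)]
    · exact if_congr (by simp only [mem_Icc] at hn ⊢; omega) rfl rfl
    · intro i _ hi
      exact if_neg (by omega)
    · intro h
      exact if_neg (by simp only [mem_range] at h; omega)
  have hshift : Icc (l - s + 1) l = (Icc 1 s).map (addLeftEmbedding (l - s)) := by
    rw [map_add_left_Icc, Nat.sub_add_cancel hsl]
  rw [sum_congr rfl hinner, sum_ite_mem, inter_eq_right.mpr (Icc_subset_Icc (by omega) hlN),
    hshift, sum_map]
  rfl

theorem theorem3_coeff_general (a : ℕ → ℂ) (t u : ℂ) (N : ℕ) :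
    PowerSeries.coeff (R := ℂ) N
      (∑ n ∈ Finset.Icc 1 N, PowerSeries.C (R := ℂ) (a n) *
        ∑ i ∈ Finset.range (N + 1),
          PowerSeries.C (R := ℂ) (t * u) * (PowerSeries.X : PowerSeries ℂ) ^ (n + i) *
            (∏ j ∈ Finset.Icc 1 (n - 1),
              (1 - PowerSeries.C (R := ℂ) ((1 - u) * t) * (PowerSeries.X : PowerSeries ℂ) ^ (i + j))) *
            (∏ j ∈ Finset.Icc 1 n,
              (1 - PowerSeries.C (R := ℂ) t * (PowerSeries.X : PowerSeries ℂ) ^ (i + j)))⁻¹) =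
    ∑ π : N.Partition, t ^ kParts π * u ^ qParts π *
      ∑ j ∈ Finset.Icc 1 (sPart π), a (lPart π - sPart π + j) := by
  calc
    _ = ∑ n ∈ Icc 1 N, ∑ i ∈ range (N + 1), ∑ π : N.Partition,
          t ^ kParts π * u ^ qParts π * if i + n = lPart π ∧ i < sPart π then a n else 0 := by
      rw [map_sum]
      refine sum_congr rfl fun n hn => ?_
      rw [coeff_C_mul, map_sum, mul_sum]
      refine sum_congr rfl fun i _ => ?_
      rw [term_eq_sub_prod_partFactor u t i (by simp at hn; omega), coeff_prod_partFactor_sub,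
        mul_sum]
      simp only [mul_ite, mul_zero, mul_comm]
    _ = ∑ π : N.Partition, t ^ kParts π * u ^ qParts π *
          ∑ n ∈ Icc 1 N, ∑ i ∈ range (N + 1),
            if i + n = lPart π ∧ i < sPart π then a n else 0 := by
      simp only [mul_sum]
      exact (sum_congr rfl fun _ _ => sum_comm).trans sum_comm
    _ = _ := sum_congr rfl fun π _ => by
      rw [sum_Icc_sum_range_ite a (sPart_le_lPart π) (lPart_le π)]

/-- Theorem 3 (coefficient-of-`q^N` form): the weighted partition generating function
for the sum `∑_{j=1}^{s(π)} a(l(π) - s(π) + j)`. -/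
theorem theorem3_coeff (a : ℕ → ℂ) (t u : ℂ) (N : ℕ) (hN : 1 ≤ N) :
    PowerSeries.coeff (R := ℂ) N
      (∑ n ∈ Finset.Icc 1 N, PowerSeries.C (R := ℂ) (a n) *
        ∑ i ∈ Finset.range (N + 1),
          PowerSeries.C (R := ℂ) (t * u) * (PowerSeries.X : PowerSeries ℂ) ^ (n + i) *
            (∏ j ∈ Finset.Icc 1 (n - 1),
              (1 - PowerSeries.C (R := ℂ) ((1 - u) * t) * (PowerSeries.X : PowerSeries ℂ) ^ (i + j))) *
            (∏ j ∈ Finset.Icc 1 n,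
              (1 - PowerSeries.C (R := ℂ) t * (PowerSeries.X : PowerSeries ℂ) ^ (i + j)))⁻¹) =
    ∑ π : N.Partition, t ^ kParts π * u ^ qParts π *
      ∑ j ∈ Finset.Icc 1 (sPart π), a (lPart π - sPart π + j) :=
  theorem3_coeff_general a t u N
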